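/- arXiv:2412.06496 — 4 statements merged into one kernel-verified Lean document; each statement's English description precedes it below -/
import Mathlib

section
/- Let n ∈ ℕ with n ≥ 2, and let p, q, l, C, T be real numbers with p > 1, q > 0, D := 1 − q(p−1) > 0, p < n, l* := (p − nD)/(1 − D) < l < p, C > 0, T > 0, κ_l := (1 − D)(l − l*), and let u(x,t) := (T−t)^{(n−l)/κ_l} · (C + κ_l^{1/(p−1)} · (D/((p−l)q)) · ‖x‖^{(p−l)/(p−1)} · (T−t)^{(p−l)/((p−1)κ_l)})^{−(p−1)/D} for t < T. Define the extension ū : ℝⁿ × ℝ → ℝ by ū(x,t) = u(x,t) for t < T and ū(x,t) = 0 for t ≥ T. Then ū is continuous on (ℝⁿ \ {0}) × ℝ; in particular, for every x ≠ 0, u(x,t) → 0 as t → T⁻, and ū(·,t) ≡ 0 for all t ≥ T (finite extinction at time T). -/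
open Real MeasureTheory Set Filter Topology

/-- The extension by `0` past time `T` of the explicit Barenblatt-type solution of the
weighted Leibenson equation is continuous on `(ℝⁿ \ {0}) × ℝ`; in particular
`u(x,t) → 0` as `t → T⁻` for every `x ≠ 0`, and the extension vanishes for `t ≥ T`
(finite extinction at time `T`). -/
theorem stmt1 (n : ℕ) (hn : 2 ≤ n) (p q l C T : ℝ)
    (hp : 1 < p) (hq : 0 < q)
    (D : ℝ) (hDdef : D = 1 - q * (p - 1)) (hD : 0 < D)
    (hpn : p < n)
    (lstar : ℝ) (hlstar : lstar = (p - n * D) / (1 - D))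
    (hl1 : lstar < l) (hl2 : l < p)
    (hC : 0 < C) (hT : 0 < T)
    (κl : ℝ) (hκ : κl = (1 - D) * (l - lstar))
    (u ubar : EuclideanSpace ℝ (Fin n) → ℝ → ℝ)
    (hu : ∀ x t, u x t = (T - t) ^ ((n - l) / κl) *
        (C + κl ^ ((1 : ℝ) / (p - 1)) * (D / ((p - l) * q)) *
          ‖x‖ ^ ((p - l) / (p - 1)) * (T - t) ^ ((p - l) / ((p - 1) * κl))) ^ (-(p - 1) / D))
    (hubar : ∀ x t, ubar x t = if t < T then u x t else 0) :
    ContinuousOn (fun z : EuclideanSpace ℝ (Fin n) × ℝ => ubar z.1 z.2)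
        {z : EuclideanSpace ℝ (Fin n) × ℝ | z.1 ≠ 0} ∧
    (∀ x : EuclideanSpace ℝ (Fin n), x ≠ 0 →
      Tendsto (fun t => u x t) (𝓝[<] T) (𝓝 0)) ∧
    (∀ x : EuclideanSpace ℝ (Fin n), ∀ t, T ≤ t → ubar x t = 0) := by
  have hp1 : (0:ℝ) < p - 1 := by linarith
  have hpl : (0:ℝ) < p - l := by linarith
  have hκ0 : 0 < κl := by
    have h1 : 0 < 1 - D := by nlinarith
    have h2 : 0 < l - lstar := by linarith
    rw [hκ]; positivity
  have hnl : (0:ℝ) < n - l := by linarith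
  have he0 : 0 < (n - l) / κl := div_pos hnl hκ0
  have hβ0 : 0 < (p - l) / ((p - 1) * κl) := div_pos hpl (by positivity)
  have hα0 : 0 < (p - l) / (p - 1) := div_pos hpl hp1
  set F : EuclideanSpace ℝ (Fin n) × ℝ → ℝ := fun z =>
    (max (T - z.2) 0) ^ ((n - l) / κl) *
      (C + κl ^ ((1 : ℝ) / (p - 1)) * (D / ((p - l) * q)) *
        ‖z.1‖ ^ ((p - l) / (p - 1)) *
        (max (T - z.2) 0) ^ ((p - l) / ((p - 1) * κl))) ^ (-(p - 1) / D) with hF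
  have hbase : ∀ z : EuclideanSpace ℝ (Fin n) × ℝ,
      0 < C + κl ^ ((1 : ℝ) / (p - 1)) * (D / ((p - l) * q)) *
        ‖z.1‖ ^ ((p - l) / (p - 1)) *
        (max (T - z.2) 0) ^ ((p - l) / ((p - 1) * κl)) := by
    intro z
    have h1 : (0:ℝ) ≤ κl ^ ((1 : ℝ) / (p - 1)) := Real.rpow_nonneg hκ0.le _
    have h2 : (0:ℝ) ≤ D / ((p - l) * q) := by positivity
    have h3 : (0:ℝ) ≤ ‖z.1‖ ^ ((p - l) / (p - 1)) := Real.rpow_nonneg (norm_nonneg _) _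
    have h4 : (0:ℝ) ≤ (max (T - z.2) 0) ^ ((p - l) / ((p - 1) * κl)) :=
      Real.rpow_nonneg (le_max_right _ _) _
    nlinarith [mul_nonneg (mul_nonneg (mul_nonneg h1 h2) h3) h4]
  have hm : Continuous fun z : EuclideanSpace ℝ (Fin n) × ℝ => max (T - z.2) 0 :=
    (continuous_const.sub continuous_snd).max continuous_const
  have hFcont : Continuous F := by
    apply Continuous.mul
    · exact hm.rpow_const (fun z => Or.inr he0.le)
    · apply Continuous.rpow_const
      · exact continuous_const.add
          ((continuous_const.mul
            ((continuous_norm.comp continuous_fst).rpow_const fun z => Or.inr hα0.le)).mul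
            (hm.rpow_const fun z => Or.inr hβ0.le))
      · exact fun z => Or.inl (hbase z).ne'
  have hFu : ∀ x t, t < T → F (x, t) = u x t := by
    intro x t ht
    have hTt : (0:ℝ) ≤ T - t := by linarith
    rw [hF, hu]
    simp only [max_eq_left hTt]
  have hFT : ∀ x t, T ≤ t → F (x, t) = 0 := by
    intro x t ht
    have : max (T - t) 0 = 0 := max_eq_right (by linarith)
    rw [hF]
    simp only [this, Real.zero_rpow he0.ne', zero_mul]
  have hFeq : (fun z : EuclideanSpace ℝ (Fin n) × ℝ => ubar z.1 z.2) = F := by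
    funext z
    rw [hubar]
    split_ifs with h
    · exact (hFu z.1 z.2 h).symm
    · exact (hFT z.1 z.2 (not_lt.mp h)).symm
  refine ⟨?_, ?_, ?_⟩
  · rw [hFeq]; exact hFcont.continuousOn
  · intro x hx
    have hc : Tendsto (fun t => F (x, t)) (𝓝 T) (𝓝 (F (x, T))) :=
      (hFcont.comp (continuous_const.prodMk continuous_id)).tendsto T
    rw [hFT x T le_rfl] at hc
    refine (hc.mono_left nhdsWithin_le_nhds).congr' ?_
    filter_upwards [self_mem_nhdsWithin] with t ht
    exact hFu x t ht
  · intro x t ht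
    rw [hubar]
    simp [not_lt.mpr ht]
end

section
/- Let n ∈ ℕ with n ≥ 2, and let p, q, l, C, T be real numbers with p > 1, q > 0, D := 1 − q(p−1) > 0, p < n, l* := (p − nD)/(1 − D) < l < p, C > 0, T > 0, κ_l := (1 − D)(l − l*), and let u(x,t) := (T−t)^{(n−l)/κ_l} · (C + κ_l^{1/(p−1)} · (D/((p−l)q)) · ‖x‖^{(p−l)/(p−1)} · (T−t)^{(p−l)/((p−1)κ_l)})^{−(p−1)/D} for t < T. Then for every fixed t ∈ (0, T), the function x ↦ u(x,t) · ‖x‖^{−l} is NOT integrable on ℝⁿ with respect to Lebesgue measure, i.e. ∫_{ℝⁿ} u(x,t) ‖x‖^{−l} dx = ∞. -/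
open Real MeasureTheory Set

open scoped ENNReal

set_option maxHeartbeats 1000000 in
/-- For each fixed `t ∈ (0,T)`, the explicit Barenblatt-type solution `u(·,t)` of the
weighted Leibenson equation is not integrable against the weight `‖x‖^{-l}`:
`∫_{ℝⁿ} u(x,t) ‖x‖^{-l} dx = ∞`. -/
theorem stmt2 (n : ℕ) (hn : 2 ≤ n) (p q l C T : ℝ)
    (hp : 1 < p) (hq : 0 < q)
    (D : ℝ) (hDdef : D = 1 - q * (p - 1)) (hD : 0 < D)
    (hpn : p < n)
    (lstar : ℝ) (hlstar : lstar = (p - n * D) / (1 - D))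
    (hl1 : lstar < l) (hl2 : l < p)
    (hC : 0 < C) (hT : 0 < T)
    (κl : ℝ) (hκ : κl = (1 - D) * (l - lstar))
    (u : EuclideanSpace ℝ (Fin n) → ℝ → ℝ)
    (hu : ∀ x t, u x t = (T - t) ^ ((n - l) / κl) *
        (C + κl ^ ((1 : ℝ) / (p - 1)) * (D / ((p - l) * q)) *
          ‖x‖ ^ ((p - l) / (p - 1)) * (T - t) ^ ((p - l) / ((p - 1) * κl))) ^ (-(p - 1) / D)) :
    ∀ t ∈ Set.Ioo 0 T,
      ∫⁻ x : EuclideanSpace ℝ (Fin n), ENNReal.ofReal (u x t * ‖x‖ ^ (-l)) = ∞ := by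
  intro t ht
  have hp1 : (0:ℝ) < p - 1 := sub_pos.2 hp
  have h1D : 0 < 1 - D := by rw [hDdef]; have := mul_pos hq hp1; linarith
  have hD1 : D < 1 := by linarith
  have hκ0 : 0 < κl := hκ ▸ mul_pos h1D (sub_pos.2 hl1)
  have hpl0 : (0:ℝ) < p - l := sub_pos.2 hl2
  have hs0 : 0 < T - t := sub_pos.2 ht.2
  set s : ℝ := T - t with hs
  have hlstar' : lstar * (1 - D) = p - n * D := by
    rw [hlstar]; field_simp
  -- the decay exponent
  set a : ℝ := (p - l) / D + l with ha
  have han : a < n := by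
    have h2 : p - l < (n - l) * D := by nlinarith [mul_lt_mul_of_pos_right hl1 h1D]
    have := (div_lt_iff₀ hD).2 h2
    rw [ha]; linarith
  have ha0 : 0 < a := by
    rcases le_or_gt 0 l with hl | hl
    · have := div_pos hpl0 hD
      rw [ha]; linarith
    · have h2 : 0 < (p - l) + l * D := by nlinarith
      have : 0 < ((p - l) + l * D) / D := div_pos h2 hD
      rw [ha]
      have : (p - l) / D + l = ((p - l) + l * D) / D := by field_simp
      rw [this]; exact div_pos h2 hD
  -- constants in the lower bound
  set B0 : ℝ := κl ^ ((1:ℝ) / (p - 1)) * (D / ((p - l) * q)) with hB0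
  have hB0pos : 0 < B0 := by
    apply mul_pos (Real.rpow_pos_of_pos hκ0 _)
    exact div_pos hD (mul_pos hpl0 hq)
  set sb : ℝ := s ^ ((p - l) / ((p - 1) * κl)) with hsb
  have hsbpos : 0 < sb := Real.rpow_pos_of_pos hs0 _
  set M : ℝ := C + B0 * sb with hM
  have hMpos : 0 < M := by positivity
  set e : ℝ := -(p - 1) / D with he
  have he0 : e ≤ 0 := by
    rw [he]
    exact div_nonpos_of_nonpos_of_nonneg (by linarith) hD.le
  set γ : ℝ := ((n : ℝ) - l) / κl with hγ
  set c : ℝ := s ^ γ * M ^ e with hc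
  have hcpos : 0 < c := mul_pos (Real.rpow_pos_of_pos hs0 _) (Real.rpow_pos_of_pos hMpos _)
  set α : ℝ := (p - l) / (p - 1) with hα
  have hαpos : 0 < α := div_pos hpl0 hp1
  have hexp : α * e + -l = -a := by
    rw [hα, he, ha]; field_simp; ring
  -- pointwise lower bound for ‖x‖ ≥ 1
  have key : ∀ x : EuclideanSpace ℝ (Fin n), 1 ≤ ‖x‖ →
      c * ‖x‖ ^ (-a) ≤ u x t * ‖x‖ ^ (-l) := by
    intro x hx
    have hx0 : (0:ℝ) < ‖x‖ := lt_of_lt_of_le one_pos hx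
    have hxα : 1 ≤ ‖x‖ ^ α := Real.one_le_rpow hx hαpos.le
    rw [hu x t, ← hs]
    have hIpos : 0 < C + B0 * ‖x‖ ^ α * sb := by positivity
    have hIle : C + B0 * ‖x‖ ^ α * sb ≤ M * ‖x‖ ^ α := by
      rw [hM]
      nlinarith [mul_pos hB0pos hsbpos]
    have hmono : (M * ‖x‖ ^ α) ^ e ≤ (C + B0 * ‖x‖ ^ α * sb) ^ e :=
      Real.rpow_le_rpow_of_nonpos hIpos hIle he0
    have heq : M ^ e * ‖x‖ ^ (α * e) = (M * ‖x‖ ^ α) ^ e := by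
      rw [Real.rpow_mul (norm_nonneg x),
        ← Real.mul_rpow hMpos.le (Real.rpow_nonneg (norm_nonneg x) α)]
    calc c * ‖x‖ ^ (-a) = s ^ γ * (M ^ e * ‖x‖ ^ (α * e)) * ‖x‖ ^ (-l) := by
          rw [← hexp, Real.rpow_add hx0, hc]
          ring
      _ ≤ s ^ γ * (C + B0 * ‖x‖ ^ α * sb) ^ e * ‖x‖ ^ (-l) := by
          apply mul_le_mul_of_nonneg_right _ (Real.rpow_nonneg (norm_nonneg x) _)
          apply mul_le_mul_of_nonneg_left _ (Real.rpow_nonneg hs0.le _)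
          rw [heq]; exact hmono
  -- the measure-theoretic part
  haveI : Nontrivial (EuclideanSpace ℝ (Fin n)) :=
    Module.nontrivial_of_finrank_pos (R := ℝ)
      (by rw [finrank_euclideanSpace_fin]; omega)
  set μ : Measure (EuclideanSpace ℝ (Fin n)) := volume with hμ
  set Bm : ℝ≥0∞ := μ (Metric.ball 0 1) with hBm
  have hBm0 : Bm ≠ 0 := (Metric.measure_ball_pos μ _ one_pos).ne'
  have hBmt : Bm ≠ ∞ := measure_ball_lt_top.ne
  set S : ℕ → Set (EuclideanSpace ℝ (Fin n)) :=
    fun k => Metric.ball (0 : EuclideanSpace ℝ (Fin n)) (2 ^ (k + 1)) \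
      Metric.closedBall 0 (2 ^ k) with hS
  have hSmeas : ∀ k, MeasurableSet (S k) :=
    fun k => measurableSet_ball.diff measurableSet_closedBall
  have hSdisj : Pairwise (Function.onFun Disjoint S) := by
    have key2 : ∀ i j : ℕ, i < j → Disjoint (S i) (S j) := by
      intro i j hij
      refine Set.disjoint_left.2 ?_
      rintro x ⟨hx1, -⟩ ⟨-, hx2⟩
      rw [mem_ball_zero_iff] at hx1
      apply hx2
      rw [mem_closedBall_zero_iff]
      calc ‖x‖ ≤ 2 ^ (i + 1) := hx1.le
        _ ≤ 2 ^ j := by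
            apply pow_le_pow_right₀ (by norm_num)
            omega
    intro i j hij
    rcases hij.lt_or_gt with h | h
    · exact key2 _ _ h
    · exact (key2 _ _ h).symm
  have hSvol : ∀ k, μ (S k) =
      ENNReal.ofReal ((2:ℝ) ^ ((k + 1) * n) - 2 ^ (k * n)) * Bm := by
    intro k
    have hsub : Metric.closedBall (0 : EuclideanSpace ℝ (Fin n)) (2 ^ k) ⊆
        Metric.ball 0 (2 ^ (k + 1)) := by
      apply Metric.closedBall_subset_ball
      have : ((2:ℝ) ^ k) * 1 < 2 ^ k * 2 := by
        have : (0:ℝ) < 2 ^ k := by positivity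
        linarith
      calc (2:ℝ) ^ k = 2 ^ k * 1 := (mul_one _).symm
        _ < 2 ^ k * 2 := this
        _ = 2 ^ (k + 1) := by ring
    rw [hS]
    rw [measure_diff hsub measurableSet_closedBall.nullMeasurableSet
      measure_closedBall_lt_top.ne]
    rw [Measure.addHaar_ball μ _ (by positivity : (0:ℝ) ≤ 2 ^ (k+1)),
      Measure.addHaar_closedBall μ _ (by positivity : (0:ℝ) ≤ 2 ^ k),
      finrank_euclideanSpace_fin, ← hBm,
      ← ENNReal.sub_mul (fun _ _ => hBmt), ← ENNReal.ofReal_sub _ (by positivity)]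
    rw [← pow_mul, ← pow_mul]
  -- constant lower bound for each shell integral
  have h2n1 : (0:ℝ) < 2 ^ n - 1 := by
    have : (1:ℝ) < 2 ^ n := by
      calc (1:ℝ) < 2 := one_lt_two
        _ ≤ 2 ^ n := by
          calc (2:ℝ) = 2 ^ 1 := (pow_one 2).symm
            _ ≤ 2 ^ n := pow_le_pow_right₀ (by norm_num) (by omega)
    linarith
  set ε : ℝ≥0∞ := ENNReal.ofReal (c * (2:ℝ) ^ (-a) * ((2:ℝ) ^ n - 1)) * Bm with hε
  have hε0 : ε ≠ 0 := by
    apply mul_ne_zero _ hBm0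
    rw [Ne, ENNReal.ofReal_eq_zero, not_le]
    have h2 : (0:ℝ) < (2:ℝ) ^ (-a) := Real.rpow_pos_of_pos two_pos _
    nlinarith [mul_pos (mul_pos hcpos h2) h2n1]
  have hterm : ∀ k : ℕ, ε ≤ ∫⁻ x in S k, ENNReal.ofReal (u x t * ‖x‖ ^ (-l)) ∂μ := by
    intro k
    have hrk : (1:ℝ) ≤ 2 ^ k := one_le_pow₀ (by norm_num)
    have hlow : ∀ x ∈ S k,
        ENNReal.ofReal (c * ((2:ℝ) ^ (k + 1)) ^ (-a)) ≤
          ENNReal.ofReal (u x t * ‖x‖ ^ (-l)) := by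
      rintro x ⟨hx1, hx2⟩
      rw [mem_ball_zero_iff] at hx1
      rw [Metric.mem_closedBall, dist_zero_right, not_le] at hx2
      have hx1' : 1 ≤ ‖x‖ := le_trans hrk hx2.le
      apply ENNReal.ofReal_le_ofReal
      calc c * ((2:ℝ) ^ (k + 1)) ^ (-a) ≤ c * ‖x‖ ^ (-a) := by
            apply mul_le_mul_of_nonneg_left _ hcpos.le
            exact Real.rpow_le_rpow_of_nonpos (lt_of_lt_of_le one_pos hx1') hx1.le
              (neg_nonpos.2 ha0.le)
        _ ≤ u x t * ‖x‖ ^ (-l) := key x hx1'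
    have hreal : c * (2:ℝ) ^ (-a) * ((2:ℝ) ^ n - 1) ≤
        c * ((2:ℝ) ^ (k + 1)) ^ (-a) * ((2:ℝ) ^ ((k + 1) * n) - 2 ^ (k * n)) := by
      have e1 : ((2:ℝ) ^ (k + 1)) ^ (-a) = (2:ℝ) ^ (((k:ℝ) + 1) * (-a)) := by
        rw [← Real.rpow_natCast (2:ℝ) (k + 1), ← Real.rpow_mul (by norm_num)]
        push_cast
        ring_nf
      have e2 : (2:ℝ) ^ ((k + 1) * n) - 2 ^ (k * n) = (2:ℝ) ^ (k * n) * ((2:ℝ) ^ n - 1) := by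
        rw [add_mul, one_mul, pow_add]; ring
      have e3 : (2:ℝ) ^ (k * n) = (2:ℝ) ^ ((k : ℝ) * (n : ℝ)) := by
        rw [← Real.rpow_natCast (2:ℝ) (k * n)]
        push_cast
        ring_nf
      have hmain : (2:ℝ) ^ (-a) ≤ (2:ℝ) ^ (((k:ℝ) + 1) * (-a)) * (2:ℝ) ^ ((k:ℝ) * (n:ℝ)) := by
        rw [← Real.rpow_add two_pos]
        apply Real.rpow_le_rpow_of_exponent_le one_le_two
        have hk0 : (0:ℝ) ≤ (k:ℝ) := Nat.cast_nonneg k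
        nlinarith
      rw [e1, e2, e3]
      calc c * (2:ℝ) ^ (-a) * ((2:ℝ) ^ n - 1)
          = (2:ℝ) ^ (-a) * (c * ((2:ℝ) ^ n - 1)) := by ring
        _ ≤ (2:ℝ) ^ (((k:ℝ) + 1) * (-a)) * (2:ℝ) ^ ((k:ℝ) * (n:ℝ)) *
            (c * ((2:ℝ) ^ n - 1)) := by
            apply mul_le_mul_of_nonneg_right hmain
            positivity
        _ = c * (2:ℝ) ^ (((k:ℝ) + 1) * (-a)) *
            ((2:ℝ) ^ ((k:ℝ) * (n:ℝ)) * ((2:ℝ) ^ n - 1)) := by ring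
    calc ε ≤ ENNReal.ofReal (c * ((2:ℝ) ^ (k + 1)) ^ (-a)) * μ (S k) := by
          rw [hε, hSvol k, ← mul_assoc]
          apply mul_le_mul_left _ Bm
          rw [← ENNReal.ofReal_mul (by positivity)]
          exact ENNReal.ofReal_le_ofReal hreal
      _ = ∫⁻ _ in S k, ENNReal.ofReal (c * ((2:ℝ) ^ (k + 1)) ^ (-a)) ∂μ :=
          (setLIntegral_const _ _).symm
      _ ≤ ∫⁻ x in S k, ENNReal.ofReal (u x t * ‖x‖ ^ (-l)) ∂μ :=
          setLIntegral_mono' (hSmeas k) hlow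
  refine top_le_iff.1 ?_
  calc (⊤ : ℝ≥0∞) = ∑' _ : ℕ, ε := (ENNReal.tsum_const_eq_top_of_ne_zero hε0).symm
    _ ≤ ∑' k, ∫⁻ x in S k, ENNReal.ofReal (u x t * ‖x‖ ^ (-l)) ∂μ :=
        ENNReal.tsum_le_tsum hterm
    _ = ∫⁻ x in ⋃ k, S k, ENNReal.ofReal (u x t * ‖x‖ ^ (-l)) ∂μ :=
        (lintegral_iUnion hSmeas hSdisj _).symm
    _ ≤ ∫⁻ x, ENNReal.ofReal (u x t * ‖x‖ ^ (-l)) ∂μ := setLIntegral_le_lintegral _ _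
end

section
/- Let n ∈ ℕ with n ≥ 2, and let p, q, l, C, T be real numbers with p > 1, q > 0, D := 1 − q(p−1) > 0, p < n, l* := (p − nD)/(1 − D) < l < p, C > 0, T > 0, κ_l := (1 − D)(l − l*), and let u(x,t) := (T−t)^{(n−l)/κ_l} · (C + κ_l^{1/(p−1)} · (D/((p−l)q)) · ‖x‖^{(p−l)/(p−1)} · (T−t)^{(p−l)/((p−1)κ_l)})^{−(p−1)/D} for t < T. Then for every fixed t ∈ (0, T) and every real ζ with ζ(p−l) > D(n−l), the function x ↦ u(x,t)^ζ · ‖x‖^{−l} is integrable on ℝⁿ with respect to Lebesgue measure: ∫_{ℝⁿ} u(x,t)^ζ ‖x‖^{−l} dx < ∞. -/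
open Real MeasureTheory Set

open scoped ENNReal

/-!
For fixed `t`, `u(x, t) = A * (C + B * ‖x‖ ^ α) ^ e` with `A, B > 0`, `α = (p - l) / (p - 1)` and
`e = -(p - 1) / D`. Hence `u(·, t) ^ ζ * ‖x‖ ^ (-l)` is a radial function that is bounded by a
multiple of `‖x‖ ^ (-l)` near the origin and of `‖x‖ ^ (-l - ζ (p - l) / D)` at infinity. In polar
coordinates both are integrable exactly when `l < n < l + ζ (p - l) / D`, which is what
`l < p < n` and `ζ (p - l) > D (n - l)` give.
-/

section RadialIntegrability

variable {a s α B C : ℝ}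

lemma rpow_mul_const_add_rpow_rpow_le_const (hC : 0 < C) (hB : 0 ≤ B) (hs : s ≤ 0) {r : ℝ}
    (hr : 0 < r) : r ^ a * (C + B * r ^ α) ^ s ≤ C ^ s * r ^ a := by
  rw [mul_comm]
  exact mul_le_mul_of_nonneg_right
    (rpow_le_rpow_of_nonpos hC (le_add_of_nonneg_right (by positivity)) hs) (by positivity)

lemma rpow_mul_const_add_rpow_rpow_le_rpow (hC : 0 ≤ C) (hB : 0 < B) (hs : s ≤ 0) {r : ℝ}
    (hr : 0 < r) : r ^ a * (C + B * r ^ α) ^ s ≤ B ^ s * r ^ (a + α * s) := by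
  calc r ^ a * (C + B * r ^ α) ^ s ≤ r ^ a * (B * r ^ α) ^ s :=
        mul_le_mul_of_nonneg_left
          (rpow_le_rpow_of_nonpos (by positivity) (le_add_of_nonneg_left hC) hs) (by positivity)
    _ = B ^ s * r ^ (a + α * s) := by
        rw [mul_rpow hB.le (by positivity), ← rpow_mul hr.le, rpow_add hr]
        ring

lemma integrableOn_Ioi_rpow_mul_const_add_rpow_rpow (hC : 0 < C) (hB : 0 < B) (hs : s ≤ 0)
    (ha : -1 < a) (has : a + α * s < -1) :
    IntegrableOn (fun r : ℝ => r ^ a * (C + B * r ^ α) ^ s) (Ioi 0) := by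
  have hmeas : AEStronglyMeasurable (fun r : ℝ => r ^ a * (C + B * r ^ α) ^ s) :=
    (by fun_prop : Measurable fun r : ℝ => r ^ a * (C + B * r ^ α) ^ s).aestronglyMeasurable
  rw [← Ioc_union_Ioi_eq_Ioi zero_le_one]
  refine IntegrableOn.union ?_ ?_
  · have hpow : IntegrableOn (fun r : ℝ => r ^ a) (Ioc 0 1) := by
      rw [← intervalIntegrable_iff_integrableOn_Ioc_of_le zero_le_one]
      exact intervalIntegral.intervalIntegrable_rpow' ha
    refine (hpow.const_mul (C ^ s)).mono' hmeas.restrict ?_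
    filter_upwards [ae_restrict_mem measurableSet_Ioc] with r hr
    rw [norm_of_nonneg (by have := hr.1; positivity)]
    exact rpow_mul_const_add_rpow_rpow_le_const hC hB.le hs hr.1
  · refine ((integrableOn_Ioi_rpow_of_lt has zero_lt_one).const_mul (B ^ s)).mono'
      hmeas.restrict ?_
    filter_upwards [ae_restrict_mem measurableSet_Ioi] with r (hr : 1 < r)
    have hr0 : 0 < r := zero_lt_one.trans hr
    rw [norm_of_nonneg (by positivity)]
    exact rpow_mul_const_add_rpow_rpow_le_rpow hC.le hB hs hr0

variable {E : Type*} [NormedAddCommGroup E] [NormedSpace ℝ E] [FiniteDimensional ℝ E]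
  [Nontrivial E] [MeasurableSpace E] [BorelSpace E] (μ : Measure E) [μ.IsAddHaarMeasure]

theorem integrable_const_add_norm_rpow_rpow_mul_norm_rpow {l : ℝ} (hC : 0 < C) (hB : 0 < B)
    (hs : s ≤ 0) (hl : l < Module.finrank ℝ E)
    (hls : (Module.finrank ℝ E : ℝ) < l - α * s) :
    Integrable (fun x : E => (C + B * ‖x‖ ^ α) ^ s * ‖x‖ ^ (-l)) μ := by
  have hd : ((Module.finrank ℝ E - 1 : ℕ) : ℝ) = Module.finrank ℝ E - 1 := by
    rw [Nat.cast_sub Module.finrank_pos, Nat.cast_one]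
  refine (integrable_fun_norm_addHaar μ (f := fun r => (C + B * r ^ α) ^ s * r ^ (-l))).2 ?_
  refine (integrableOn_Ioi_rpow_mul_const_add_rpow_rpow (a := Module.finrank ℝ E - 1 - l)
    hC hB hs (by linarith) (by linarith)).congr_fun (fun r (hr : 0 < r) => ?_) measurableSet_Ioi
  simp only [smul_eq_mul]
  rw [sub_eq_add_neg _ l, rpow_add hr, ← hd, rpow_natCast]
  ring

end RadialIntegrability

theorem stmt3_general (n : ℕ) (p q l C T : ℝ)
    (hp : 1 < p) (hq : 0 < q)
    (D : ℝ) (hDdef : D = 1 - q * (p - 1)) (hD : 0 < D)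
    (hpn : p < n)
    (lstar : ℝ)
    (hl1 : lstar < l) (hl2 : l < p)
    (hC : 0 < C)
    (κl : ℝ) (hκ : κl = (1 - D) * (l - lstar))
    (u : EuclideanSpace ℝ (Fin n) → ℝ → ℝ)
    (hu : ∀ x t, u x t = (T - t) ^ ((n - l) / κl) *
        (C + κl ^ ((1 : ℝ) / (p - 1)) * (D / ((p - l) * q)) *
          ‖x‖ ^ ((p - l) / (p - 1)) * (T - t) ^ ((p - l) / ((p - 1) * κl))) ^ (-(p - 1) / D)) :
    ∀ t ∈ Set.Ioo 0 T, ∀ ζ : ℝ, D * (n - l) < ζ * (p - l) →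
      ∫⁻ x : EuclideanSpace ℝ (Fin n), ENNReal.ofReal (u x t ^ ζ * ‖x‖ ^ (-l)) < ∞ := by
  intro t ⟨_, htT⟩ ζ hζ
  have hTt : 0 < T - t := sub_pos.2 htT
  have hp1 : 0 < p - 1 := by linarith
  have hpl : 0 < p - l := by linarith
  have hnl : 0 < n - l := by linarith
  have hκl : 0 < κl := by
    rw [hκ]
    exact mul_pos (by nlinarith) (by linarith)
  have hζ0 : 0 < ζ := pos_of_mul_pos_left ((mul_pos hD hnl).trans hζ) hpl.le
  have : NeZero n := ⟨by rintro rfl; norm_num at hpn; linarith⟩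
  set A := (T - t) ^ ((n - l) / κl)
  set B := κl ^ ((1 : ℝ) / (p - 1)) * (D / ((p - l) * q)) * (T - t) ^ ((p - l) / ((p - 1) * κl))
  set α := (p - l) / (p - 1)
  set e := -(p - 1) / D
  have hdecay : (n : ℝ) < l - α * (e * ζ) := by
    have : α * (e * ζ) = -(ζ * (p - l) / D) := by simp only [α, e]; field_simp
    rw [this, sub_neg_eq_add, ← sub_lt_iff_lt_add', lt_div_iff₀ hD]
    linarith
  have hint := integrable_const_add_norm_rpow_rpow_mul_norm_rpow (l := l) (s := e * ζ)
    (α := α) (B := B) (volume : Measure (EuclideanSpace ℝ (Fin n))) hC (by positivity)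
    (mul_nonpos_of_nonpos_of_nonneg (div_nonpos_of_nonpos_of_nonneg (by linarith) hD.le) hζ0.le)
    (by rw [finrank_euclideanSpace_fin]; linarith) (by rwa [finrank_euclideanSpace_fin])
  have hux : ∀ x, u x t ^ ζ * ‖x‖ ^ (-l) =
      A ^ ζ * ((C + B * ‖x‖ ^ α) ^ (e * ζ) * ‖x‖ ^ (-l)) := by
    intro x
    have hbase : 0 < C + B * ‖x‖ ^ α := by positivity
    have hu_sep : u x t = A * (C + B * ‖x‖ ^ α) ^ e := by
      rw [hu, mul_right_comm _ (‖x‖ ^ α)]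
    rw [hu_sep, mul_rpow (by positivity) (by positivity), ← rpow_mul hbase.le, mul_assoc]
  simpa only [hux] using (hint.const_mul (A ^ ζ)).lintegral_lt_top

/-- For each fixed `t ∈ (0,T)` and every `ζ` with `ζ(p-l) > D(n-l)`, the power `u(·,t)^ζ`
of the explicit Barenblatt-type solution of the weighted Leibenson equation is integrable
against the weight `‖x‖^{-l}`: `∫_{ℝⁿ} u(x,t)^ζ ‖x‖^{-l} dx < ∞`. -/
theorem stmt3 (n : ℕ) (hn : 2 ≤ n) (p q l C T : ℝ)
    (hp : 1 < p) (hq : 0 < q)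
    (D : ℝ) (hDdef : D = 1 - q * (p - 1)) (hD : 0 < D)
    (hpn : p < n)
    (lstar : ℝ) (hlstar : lstar = (p - n * D) / (1 - D))
    (hl1 : lstar < l) (hl2 : l < p)
    (hC : 0 < C) (hT : 0 < T)
    (κl : ℝ) (hκ : κl = (1 - D) * (l - lstar))
    (u : EuclideanSpace ℝ (Fin n) → ℝ → ℝ)
    (hu : ∀ x t, u x t = (T - t) ^ ((n - l) / κl) *
        (C + κl ^ ((1 : ℝ) / (p - 1)) * (D / ((p - l) * q)) *
          ‖x‖ ^ ((p - l) / (p - 1)) * (T - t) ^ ((p - l) / ((p - 1) * κl))) ^ (-(p - 1) / D)) :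
    ∀ t ∈ Set.Ioo 0 T, ∀ ζ : ℝ, D * (n - l) < ζ * (p - l) →
      ∫⁻ x : EuclideanSpace ℝ (Fin n), ENNReal.ofReal (u x t ^ ζ * ‖x‖ ^ (-l)) < ∞ :=
  stmt3_general n p q l C T hp hq D hDdef hD hpn lstar hl1 hl2 hC κl hκ u hu
end

section
/- Let (X, μ) be a measure space, let ρ, ω : X → (0,∞) be measurable, and let σ, D, κ, c₁, C_S be real numbers with σ > 0, D > 0, κ > 1, σ(κ−1) > D, c₁ > 0, C_S > 0. Set θ := σκ/(σ(κ−1) − D) and N := (∫_X (ρ/ω)^θ ω dμ)^{1/θ}, and assume N < ∞. Let u : X × [0,∞) → [0,∞] be measurable, set Φ(t) := ∫_X u(x,t)^{σ+D} ρ(x) dμ(x), and assume Φ(0) < ∞. Suppose there is a measurable function E : [0,∞) → [0,∞] such that: (i) (∫_X u(x,t)^{σκ} ω(x) dμ(x))^{1/κ} ≤ C_S · E(t) for every t ≥ 0, and (ii) Φ(t₂) ≤ Φ(t₁) − c₁ ∫_{t₁}^{t₂} E(s) ds for all 0 ≤ t₁ ≤ t₂. Then Φ(t₂) ≤ Φ(t₁)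 − c₁ C_S^{−1} N^{−σ/(σ+D)} ∫_{t₁}^{t₂} Φ(s)^{σ/(σ+D)} ds for all 0 ≤ t₁ ≤ t₂, and consequently Φ(t) = 0 for all t ≥ T := ((σ+D)/D) · C_S N^{σ/(σ+D)} c₁^{−1} · Φ(0)^{D/(σ+D)}. -/
open MeasureTheory

open scoped ENNReal

section AuxODE

open Filter


/-- Concavity step: `y^β + βh(y+h)^{β-1} ≤ (y+h)^β`. -/
lemma lemA {y h β : ℝ} (hy : 0 < y) (hh : 0 ≤ h) (hβ0 : 0 ≤ β) (hβ1 : β ≤ 1) :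
    y ^ β + β * h * (y + h) ^ (β - 1) ≤ (y + h) ^ β := by
  have hP : 0 < y + h := by linarith
  set s : ℝ := y / (y + h) with hs
  have hs0 : 0 ≤ s := div_nonneg hy.le hP.le
  have key : (1 + (s - 1)) ^ β ≤ 1 + β * (s - 1) :=
    rpow_one_add_le_one_add_mul_self (by linarith) hβ0 hβ1
  have h1 : (1 + (s - 1)) = s := by ring
  rw [h1] at key
  have h2 : s ^ β * (y + h) ^ β = y ^ β := by
    rw [← Real.mul_rpow hs0 hP.le, hs, div_mul_cancel₀ _ hP.ne']
  have h3 : (y + h) ^ (β - 1) = (y + h) ^ β / (y + h) := by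
    rw [Real.rpow_sub hP, Real.rpow_one]
  have h4 : (1 + β * (s - 1)) * (y + h) ^ β
      = (y + h) ^ β - β * h * ((y + h) ^ β / (y + h)) := by
    rw [hs]; field_simp; ring
  have h5 := mul_le_mul_of_nonneg_right key (Real.rpow_nonneg hP.le β)
  rw [h4] at h5
  rw [h2] at h5
  rw [h3]
  linarith

/-- One subdivision step. -/
lemma lemStep {α β C δ ε x y : ℝ} (hα0 : 0 < α) (hα1 : α < 1) (hβ : β = 1 - α)
    (hC : 0 < C) (hδ : 0 < δ) (hε : 0 < ε) (hy : ε ≤ y)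
    (hx : y + C * δ * y ^ α ≤ x) :
    y ^ β + β * C * δ * (1 + C * δ * ε ^ (α - 1)) ^ (β - 1) ≤ x ^ β := by
  have hy0 : 0 < y := lt_of_lt_of_le hε hy
  have hh : 0 ≤ C * δ * y ^ α := by positivity
  have hβ0 : 0 < β := by rw [hβ]; linarith
  have hβ1 : β ≤ 1 := by rw [hβ]; linarith
  -- lemA with h := C δ y^α
  have hA := lemA hy0 hh hβ0.le hβ1
  have hx0 : 0 ≤ y + C * δ * y ^ α := by positivity
  have hmono : (y + C * δ * y ^ α) ^ β ≤ x ^ β :=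
    Real.rpow_le_rpow hx0 hx hβ0.le
  -- rewrite (y + h)^{β-1}
  have hpow : y ^ (α - 1) * y = y ^ α := by
    have := Real.rpow_add hy0 (α - 1) 1
    rw [Real.rpow_one] at this
    rw [← this]; norm_num
  have hsplit : y + C * δ * y ^ α = y * (1 + C * δ * y ^ (α - 1)) := by
    rw [mul_add, mul_one]
    have : y * (C * δ * y ^ (α - 1)) = C * δ * (y ^ (α - 1) * y) := by ring
    rw [this, hpow]
  -- (y*(1+u))^{β-1} = y^{β-1} * (1+u)^{β-1}
  have hu0 : 0 ≤ 1 + C * δ * y ^ (α - 1) := by positivity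
  have hfac : (y + C * δ * y ^ α) ^ (β - 1)
      = y ^ (β - 1) * (1 + C * δ * y ^ (α - 1)) ^ (β - 1) := by
    rw [hsplit, Real.mul_rpow hy0.le hu0]
  -- y^α * y^{β-1} = 1
  have hcanc : y ^ α * y ^ (β - 1) = 1 := by
    rw [← Real.rpow_add hy0]
    have : α + (β - 1) = 0 := by rw [hβ]; ring
    rw [this, Real.rpow_zero]
  -- antitone in base, exponent β-1 ≤ 0
  have hba : y ^ (α - 1) ≤ ε ^ (α - 1) :=
    Real.rpow_le_rpow_of_nonpos hε hy (by linarith)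
  have hbb : (1 + C * δ * ε ^ (α - 1)) ^ (β - 1)
      ≤ (1 + C * δ * y ^ (α - 1)) ^ (β - 1) := by
    apply Real.rpow_le_rpow_of_nonpos (by positivity)
    · nlinarith [mul_pos hC hδ]
    · rw [hβ]; linarith
  have hterm : β * C * δ * (1 + C * δ * ε ^ (α - 1)) ^ (β - 1)
      ≤ β * (C * δ * y ^ α) * (y + C * δ * y ^ α) ^ (β - 1) := by
    rw [hfac]
    have : β * (C * δ * y ^ α) * (y ^ (β - 1) * (1 + C * δ * y ^ (α - 1)) ^ (β - 1))
        = β * C * δ * ((y ^ α * y ^ (β - 1)) * (1 + C * δ * y ^ (α - 1)) ^ (β - 1)) := by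
      ring
    rw [this, hcanc, one_mul]
    have hn : 0 ≤ β * C * δ := by positivity
    exact mul_le_mul_of_nonneg_left hbb hn
  linarith

/-- Discrete ODE comparison: the sharp power-decay estimate. -/
lemma lemODE (φ : ℝ → ℝ) (C α : ℝ) (hC : 0 < C) (hα0 : 0 < α) (hα1 : α < 1)
    (hpos : ∀ t, 0 ≤ t → 0 ≤ φ t)
    (key : ∀ t₁ t₂, 0 ≤ t₁ → t₁ ≤ t₂ → φ t₂ + C * (t₂ - t₁) * φ t₂ ^ α ≤ φ t₁)
    {t₁ t₂ : ℝ} (h1 : 0 ≤ t₁) (h12 : t₁ ≤ t₂) (hε : 0 < φ t₂) :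
    φ t₂ ^ (1 - α) + (1 - α) * C * (t₂ - t₁) ≤ φ t₁ ^ (1 - α) := by
  set β : ℝ := 1 - α with hβ
  have hβ0 : 0 < β := by rw [hβ]; linarith
  have hmono : ∀ s₁ s₂, 0 ≤ s₁ → s₁ ≤ s₂ → φ s₂ ≤ φ s₁ := by
    intro s₁ s₂ hs₁ hs
    have h := key s₁ s₂ hs₁ hs
    have : 0 ≤ C * (s₂ - s₁) * φ s₂ ^ α :=
      mul_nonneg (mul_nonneg hC.le (by linarith))
        (Real.rpow_nonneg (hpos s₂ (le_trans hs₁ hs)) α)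
    linarith
  rcases eq_or_lt_of_le h12 with rfl | hlt
  · simp
  set Δ : ℝ := t₂ - t₁ with hΔ
  have hΔ0 : 0 < Δ := by rw [hΔ]; linarith
  set ε : ℝ := φ t₂ with hεdef
  set K : ℝ := C * Δ * ε ^ (α - 1) with hK
  have hK0 : 0 < K := by
    apply mul_pos (mul_pos hC hΔ0) (Real.rpow_pos_of_pos hε _)
  -- main discrete estimate for each n ≥ 1
  have main : ∀ n : ℕ, 1 ≤ n →
      ε ^ β + β * C * Δ * (1 + K / n) ^ (β - 1) ≤ φ t₁ ^ β := by
    intro n hn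
    have hn0 : 0 < (n : ℝ) := by exact_mod_cast hn
    set δ : ℝ := Δ / n with hδdef
    have hδ0 : 0 < δ := div_pos hΔ0 hn0
    have hKn : C * δ * ε ^ (α - 1) = K / n := by
      rw [hK, hδdef]; ring
    -- induction
    have ind : ∀ i : ℕ, i ≤ n →
        φ (t₁ + i * δ) ^ β + β * C * (i * δ) * (1 + K / n) ^ (β - 1) ≤ φ t₁ ^ β := by
      intro i
      induction i with
      | zero =>
        intro _
        simp only [Nat.cast_zero, zero_mul, mul_zero, add_zero, zero_add]
        norm_num
      | succ i ih =>
        intro hin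
        have hi' : i ≤ n := le_trans (Nat.le_succ i) hin
        have ihi := ih hi'
        set a : ℝ := t₁ + i * δ with ha
        set b : ℝ := t₁ + (i + 1 : ℕ) * δ with hb
        have hia : (0:ℝ) ≤ i * δ := by positivity
        have ha0 : 0 ≤ a := by rw [ha]; linarith
        have hab : a ≤ b := by
          rw [ha, hb]; push_cast; nlinarith
        have hbt2 : b ≤ t₂ := by
          rw [hb, hδdef]
          have : ((i:ℝ) + 1) ≤ n := by exact_mod_cast hin
          have h2 : ((i + 1 : ℕ) : ℝ) * (Δ / n) ≤ Δ := by
            push_cast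
            rw [← mul_div_assoc, div_le_iff₀ hn0]
            nlinarith
          rw [hΔ] at h2; linarith
        have hb0 : 0 ≤ b := le_trans ha0 hab
        have hyε : ε ≤ φ b := hmono b t₂ hb0 hbt2
        have hkey := key a b ha0 hab
        have hba : b - a = δ := by rw [ha, hb]; push_cast; ring
        rw [hba] at hkey
        have hstep := lemStep hα0 hα1 hβ hC hδ0 hε hyε hkey
        rw [hKn] at hstep
        have hcast : ((i + 1 : ℕ) : ℝ) * δ = (i : ℝ) * δ + δ := by push_cast; ring
        rw [hb] at hstep
        calc φ (t₁ + (i + 1 : ℕ) * δ) ^ β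
              + β * C * (((i + 1 : ℕ) : ℝ) * δ) * (1 + K / n) ^ (β - 1)
            = (φ (t₁ + (i + 1 : ℕ) * δ) ^ β + β * C * δ * (1 + K / n) ^ (β - 1))
              + β * C * ((i : ℝ) * δ) * (1 + K / n) ^ (β - 1) := by
              rw [hcast]; ring
          _ ≤ φ a ^ β + β * C * ((i : ℝ) * δ) * (1 + K / n) ^ (β - 1) := by linarith
          _ ≤ φ t₁ ^ β := ihi
    have hfin := ind n le_rfl
    have hnδ : (n : ℝ) * δ = Δ := by
      rw [hδdef]; field_simp
    rw [hnδ] at hfin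
    have htn : t₁ + Δ = t₂ := by rw [hΔ]; ring
    rw [htn] at hfin
    exact hfin
  -- pass to the limit n → ∞
  have hlim : Filter.Tendsto (fun n : ℕ => ε ^ β + β * C * Δ * (1 + K / n) ^ (β - 1))
      atTop (nhds (ε ^ β + β * C * Δ)) := by
    have l0 : Filter.Tendsto (fun n : ℕ => 1 + K / n) atTop (nhds 1) := by
      have := tendsto_const_div_atTop_nhds_zero_nat K
      simpa using tendsto_const_nhds.add this
    have hc : ContinuousAt (fun x : ℝ => x ^ (β - 1)) 1 :=
      Real.continuousAt_rpow_const 1 (β - 1) (Or.inl one_ne_zero)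
    have l1 : Filter.Tendsto (fun n : ℕ => (1 + K / n) ^ (β - 1)) atTop (nhds 1) := by
      have := hc.tendsto.comp l0
      simpa [Real.one_rpow, Function.comp_def] using this
    have : Filter.Tendsto (fun n : ℕ => β * C * Δ * (1 + K / n) ^ (β - 1)) atTop
        (nhds (β * C * Δ)) := by
      simpa using tendsto_const_nhds.mul l1
    simpa using tendsto_const_nhds.add this
  have := le_of_tendsto hlim (Filter.eventually_atTop.2 ⟨1, main⟩)
  rw [hεdef, hβ, hΔ] at this
  exact this

end AuxODE

/-- Analytic skeleton of the finite-extinction theorem: if `Φ(t) = ∫ u^{σ+D} ρ dμ` satisfies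
the weighted-Sobolev bound (i) `(∫ u^{σκ} ω dμ)^{1/κ} ≤ C_S E(t)` and the Caccioppoli-type
inequality (ii) `Φ(t₂) + c₁ ∫_{t₁}^{t₂} E ≤ Φ(t₁)`, and `N = ‖ρ/ω‖_{L^θ(ω dμ)} < ∞` with
`θ = σκ/(σ(κ-1) - D)`, then
`Φ(t₂) + c₁ C_S⁻¹ N^{-σ/(σ+D)} ∫_{t₁}^{t₂} Φ^{σ/(σ+D)} ≤ Φ(t₁)` for `0 ≤ t₁ ≤ t₂`, and
`Φ(t) = 0` for all `t ≥ T := ((σ+D)/D) C_S N^{σ/(σ+D)} c₁⁻¹ Φ(0)^{D/(σ+D)}`. -/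
theorem stmt15 {X : Type*} [MeasurableSpace X] (μ : Measure X)
    (ρ ω : X → ℝ) (hρm : Measurable ρ) (hωm : Measurable ω)
    (hρpos : ∀ x, 0 < ρ x) (hωpos : ∀ x, 0 < ω x)
    (σ D κ c₁ CS : ℝ) (hσ : 0 < σ) (hD : 0 < D) (hκ : 1 < κ)
    (hσκ : D < σ * (κ - 1)) (hc₁ : 0 < c₁) (hCS : 0 < CS)
    (θ : ℝ) (hθ : θ = σ * κ / (σ * (κ - 1) - D))
    (N : ℝ≥0∞)
    (hN : N = (∫⁻ x, ENNReal.ofReal (ρ x / ω x) ^ θ * ENNReal.ofReal (ω x) ∂μ) ^ (1 / θ))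
    (hNfin : N < ∞)
    (u : X → ℝ → ℝ≥0∞) (hum : ∀ t, Measurable fun x => u x t)
    (Φ : ℝ → ℝ≥0∞)
    (hΦ : ∀ t, Φ t = ∫⁻ x, u x t ^ (σ + D) * ENNReal.ofReal (ρ x) ∂μ)
    (hΦ0 : Φ 0 < ∞)
    (E : ℝ → ℝ≥0∞)
    (hi : ∀ t, 0 ≤ t →
      (∫⁻ x, u x t ^ (σ * κ) * ENNReal.ofReal (ω x) ∂μ) ^ (1 / κ) ≤ ENNReal.ofReal CS * E t)
    (hii : ∀ t₁ t₂, 0 ≤ t₁ → t₁ ≤ t₂ →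
      Φ t₂ + ENNReal.ofReal c₁ * ∫⁻ s in Set.Ioc t₁ t₂, E s ≤ Φ t₁) :
    (∀ t₁ t₂, 0 ≤ t₁ → t₁ ≤ t₂ →
      Φ t₂ + (ENNReal.ofReal c₁ / ENNReal.ofReal CS) * N ^ (-(σ / (σ + D))) *
        ∫⁻ s in Set.Ioc t₁ t₂, Φ s ^ (σ / (σ + D)) ≤ Φ t₁) ∧
    ∀ t, ((σ + D) / D) * CS * N.toReal ^ (σ / (σ + D)) * c₁⁻¹ *
        (Φ 0).toReal ^ (D / (σ + D)) ≤ t →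
      Φ t = 0 := by
  have hσD : 0 < σ + D := by linarith
  have hκ0 : 0 < κ := by linarith
  have hσκ0 : 0 < σ * κ := by positivity
  have hden : 0 < σ * (κ - 1) - D := by linarith
  have hθpos : 0 < θ := by rw [hθ]; positivity
  set α : ℝ := σ / (σ + D) with hαdef
  have hα0 : 0 < α := by positivity
  have hα1 : α < 1 := by rw [hαdef, div_lt_one hσD]; linarith
  have hp1 : 1 < σ * κ / (σ + D) := by
    rw [lt_div_iff₀ hσD]; nlinarith
  have hpq : (σ * κ / (σ + D)).HolderConjugate θ := by
    rw [Real.holderConjugate_iff]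
    constructor
    · exact hp1
    · rw [hθ]
      rw [inv_div, inv_div]
      field_simp
      ring
  set A : ℝ → ℝ≥0∞ := fun t => ∫⁻ x, u x t ^ (σ * κ) * ENNReal.ofReal (ω x) ∂μ with hA
  have hHold : ∀ t, Φ t ≤ A t ^ ((σ + D) / (σ * κ)) * N := by
    intro t
    set ν := μ.withDensity fun x => ENNReal.ofReal (ω x) with hν
    have hων : Measurable fun x => ENNReal.ofReal (ω x) := hωm.ennreal_ofReal
    have hf : Measurable fun x => u x t ^ (σ + D) :=
      ENNReal.continuous_rpow_const.measurable.comp (hum t)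
    have hg : Measurable fun x => ENNReal.ofReal (ρ x / ω x) :=
      (hρm.div hωm).ennreal_ofReal
    have H := ENNReal.lintegral_mul_le_Lp_mul_Lq ν hpq hf.aemeasurable hg.aemeasurable
    simp only [Pi.mul_apply] at H
    have e1 : (∫⁻ a, u a t ^ (σ + D) * ENNReal.ofReal (ρ a / ω a) ∂ν) = Φ t := by
      have h0 := lintegral_withDensity_eq_lintegral_mul μ hων (hf.mul hg)
      simp only [Pi.mul_apply] at h0
      rw [hν, h0, hΦ t]
      apply lintegral_congr
      intro x
      have : ENNReal.ofReal (ω x) * (u x t ^ (σ + D) * ENNReal.ofReal (ρ x / ω x))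
          = u x t ^ (σ + D) * (ENNReal.ofReal (ω x) * ENNReal.ofReal (ρ x / ω x)) := by ring
      rw [this, ← ENNReal.ofReal_mul (hωpos x).le, mul_comm (ω x),
        div_mul_cancel₀ _ (hωpos x).ne']
    have e2 : (∫⁻ a, (u a t ^ (σ + D)) ^ (σ * κ / (σ + D)) ∂ν) = A t := by
      have hfm : Measurable fun x => (u x t ^ (σ + D)) ^ (σ * κ / (σ + D)) :=
        ENNReal.continuous_rpow_const.measurable.comp hf
      have h0 := lintegral_withDensity_eq_lintegral_mul μ hων hfm
      simp only [Pi.mul_apply] at h0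
      rw [hν, h0, hA]
      apply lintegral_congr
      intro x
      rw [← ENNReal.rpow_mul]
      have : (σ + D) * (σ * κ / (σ + D)) = σ * κ := by field_simp
      rw [this, mul_comm]
    have e3 : (∫⁻ a, ENNReal.ofReal (ρ a / ω a) ^ θ ∂ν) ^ (1 / θ) = N := by
      have hgm : Measurable fun x => ENNReal.ofReal (ρ x / ω x) ^ θ :=
        ENNReal.continuous_rpow_const.measurable.comp hg
      have h0 := lintegral_withDensity_eq_lintegral_mul μ hων hgm
      simp only [Pi.mul_apply] at h0
      rw [hν, h0, hN]
      congr 1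
      apply lintegral_congr
      intro x
      ring
    rw [e1, e2, e3] at H
    have : 1 / (σ * κ / (σ + D)) = (σ + D) / (σ * κ) := by
      rw [one_div, inv_div]
    rw [this] at H
    exact H
  have hbound : ∀ t, 0 ≤ t → Φ t ^ α ≤ ENNReal.ofReal CS * E t * N ^ α := by
    intro t ht
    calc Φ t ^ α ≤ (A t ^ ((σ + D) / (σ * κ)) * N) ^ α :=
          ENNReal.rpow_le_rpow (hHold t) hα0.le
      _ = (A t ^ ((σ + D) / (σ * κ))) ^ α * N ^ α :=
          ENNReal.mul_rpow_of_nonneg _ _ hα0.le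
      _ = A t ^ (1 / κ) * N ^ α := by
          have hexp : (σ + D) / (σ * κ) * α = 1 / κ := by
            rw [hαdef]; field_simp
          rw [← ENNReal.rpow_mul, hexp]
      _ ≤ ENNReal.ofReal CS * E t * N ^ α :=
          mul_le_mul_left (hi t ht) _
  have part1 : ∀ t₁ t₂, 0 ≤ t₁ → t₁ ≤ t₂ →
      Φ t₂ + (ENNReal.ofReal c₁ / ENNReal.ofReal CS) * N ^ (-α) *
        ∫⁻ s in Set.Ioc t₁ t₂, Φ s ^ α ≤ Φ t₁ := by
    intro t₁ t₂ ht₁ h12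
    set c : ℝ≥0∞ := ENNReal.ofReal c₁ / ENNReal.ofReal CS * N ^ (-α) with hc
    have hCN_ne_top : ENNReal.ofReal CS * N ^ α ≠ ⊤ :=
      ENNReal.mul_ne_top ENNReal.ofReal_ne_top
        (ENNReal.rpow_ne_top_of_nonneg hα0.le hNfin.ne)
    have hcc : c * (ENNReal.ofReal CS * N ^ α) ≤ ENNReal.ofReal c₁ := by
      have h1 : c * (ENNReal.ofReal CS * N ^ α)
          = ENNReal.ofReal c₁ * ((ENNReal.ofReal CS)⁻¹ * ENNReal.ofReal CS)
            * ((N ^ α)⁻¹ * N ^ α) := by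
        rw [hc, ENNReal.rpow_neg, div_eq_mul_inv]
        ring
      rw [h1]
      calc ENNReal.ofReal c₁ * ((ENNReal.ofReal CS)⁻¹ * ENNReal.ofReal CS)
            * ((N ^ α)⁻¹ * N ^ α)
          ≤ ENNReal.ofReal c₁ * 1 * 1 :=
            mul_le_mul' (mul_le_mul' le_rfl (ENNReal.inv_mul_le_one _))
              (ENNReal.inv_mul_le_one _)
        _ = ENNReal.ofReal c₁ := by simp
    calc Φ t₂ + c * ∫⁻ s in Set.Ioc t₁ t₂, Φ s ^ α
        ≤ Φ t₂ + c * ∫⁻ s in Set.Ioc t₁ t₂, ENNReal.ofReal CS * E s * N ^ α := by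
          refine add_le_add_right (mul_le_mul_right ?_ c) _
          exact setLIntegral_mono' measurableSet_Ioc fun s hs =>
            hbound s (le_trans ht₁ hs.1.le)
      _ = Φ t₂ + c * ((ENNReal.ofReal CS * N ^ α) * ∫⁻ s in Set.Ioc t₁ t₂, E s) := by
          congr 1
          congr 1
          rw [← lintegral_const_mul' _ _ hCN_ne_top]
          apply lintegral_congr
          intro s
          ring
      _ = Φ t₂ + (c * (ENNReal.ofReal CS * N ^ α)) * ∫⁻ s in Set.Ioc t₁ t₂, E s := by
          rw [hc]; ring_nf
      _ ≤ Φ t₂ + ENNReal.ofReal c₁ * ∫⁻ s in Set.Ioc t₁ t₂, E s :=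
          add_le_add_right (mul_le_mul_left hcc _) _
      _ ≤ Φ t₁ := hii t₁ t₂ ht₁ h12
  have part2 : ∀ t, ((σ + D) / D) * CS * N.toReal ^ α * c₁⁻¹ *
      (Φ 0).toReal ^ (D / (σ + D)) ≤ t → Φ t = 0 := by
    by_cases hN0 : N = 0
    · -- degenerate case : μ = 0
      have hI : (∫⁻ x, ENNReal.ofReal (ρ x / ω x) ^ θ * ENNReal.ofReal (ω x) ∂μ) = 0 := by
        have h0 : (∫⁻ x, ENNReal.ofReal (ρ x / ω x) ^ θ * ENNReal.ofReal (ω x) ∂μ) ^ (1 / θ)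
            = 0 := hN.symm.trans hN0
        rcases ENNReal.rpow_eq_zero_iff.1 h0 with ⟨h, _⟩ | ⟨_, hlt⟩
        · exact h
        · exact absurd hlt (not_lt.2 (by positivity))
      have hm : Measurable fun x => ENNReal.ofReal (ρ x / ω x) ^ θ * ENNReal.ofReal (ω x) :=
        (ENNReal.continuous_rpow_const.measurable.comp
          (hρm.div hωm).ennreal_ofReal).mul hωm.ennreal_ofReal
      have hae := (lintegral_eq_zero_iff hm).1 hI
      have h2 : μ {x | ¬ (ENNReal.ofReal (ρ x / ω x) ^ θ * ENNReal.ofReal (ω x) = 0)} = 0 := by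
        simpa [Filter.EventuallyEq, ae_iff] using hae
      have huniv : {x | ¬ (ENNReal.ofReal (ρ x / ω x) ^ θ * ENNReal.ofReal (ω x) = 0)}
          = Set.univ := by
        ext x
        simp only [Set.mem_setOf_eq, Set.mem_univ, iff_true]
        exact mul_ne_zero
          ((ENNReal.rpow_pos (ENNReal.ofReal_pos.2 (div_pos (hρpos x) (hωpos x)))
            ENNReal.ofReal_ne_top).ne')
          (ENNReal.ofReal_pos.2 (hωpos x)).ne'
      have hμ : μ = 0 := by
        rw [huniv] at h2
        exact Measure.measure_univ_eq_zero.1 h2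
      intro t _
      rw [hΦ t, hμ]
      simp
    · -- main case
      have hNtop : N ≠ ⊤ := hNfin.ne
      set c : ℝ≥0∞ := ENNReal.ofReal c₁ / ENNReal.ofReal CS * N ^ (-α) with hc
      have hNpos : (0 : ℝ≥0∞) < N := zero_lt_iff.2 hN0
      have hc_ne0 : c ≠ 0 := by
        apply mul_ne_zero
        · rw [div_eq_mul_inv]
          exact mul_ne_zero (ENNReal.ofReal_pos.2 hc₁).ne'
            (ENNReal.inv_ne_zero.2 ENNReal.ofReal_ne_top)
        · exact (ENNReal.rpow_pos hNpos hNtop).ne'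
      have hc_netop : c ≠ ⊤ := by
        apply ENNReal.mul_ne_top
        · exact (ENNReal.div_lt_top ENNReal.ofReal_ne_top
            (ENNReal.ofReal_pos.2 hCS).ne').ne
        · rw [ENNReal.rpow_neg]
          exact ENNReal.inv_ne_top.2 (ENNReal.rpow_pos hNpos hNtop).ne'
      have hmonoΦ : ∀ s₁ s₂, 0 ≤ s₁ → s₁ ≤ s₂ → Φ s₂ ≤ Φ s₁ := fun s₁ s₂ h h' =>
        le_trans le_self_add (part1 s₁ s₂ h h')
      have hfin : ∀ t, 0 ≤ t → Φ t ≠ ⊤ := fun t ht =>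
        (lt_of_le_of_lt (hmonoΦ 0 t le_rfl ht) hΦ0).ne
      have keyE : ∀ t₁ t₂, 0 ≤ t₁ → t₁ ≤ t₂ →
          Φ t₂ + c * ENNReal.ofReal (t₂ - t₁) * Φ t₂ ^ α ≤ Φ t₁ := by
        intro t₁ t₂ ht₁ h12
        have hlow : Φ t₂ ^ α * ENNReal.ofReal (t₂ - t₁)
            ≤ ∫⁻ s in Set.Ioc t₁ t₂, Φ s ^ α := by
          have h1 : (∫⁻ _ in Set.Ioc t₁ t₂, Φ t₂ ^ α)
              = Φ t₂ ^ α * ENNReal.ofReal (t₂ - t₁) := by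
            rw [setLIntegral_const, Real.volume_Ioc]
          rw [← h1]
          exact setLIntegral_mono' measurableSet_Ioc fun s hs =>
            ENNReal.rpow_le_rpow (hmonoΦ s t₂ (le_trans ht₁ hs.1.le) hs.2) hα0.le
        calc Φ t₂ + c * ENNReal.ofReal (t₂ - t₁) * Φ t₂ ^ α
            = Φ t₂ + c * (Φ t₂ ^ α * ENNReal.ofReal (t₂ - t₁)) := by ring
          _ ≤ Φ t₂ + c * ∫⁻ s in Set.Ioc t₁ t₂, Φ s ^ α :=
              add_le_add_right (mul_le_mul_right hlow c) _
          _ ≤ Φ t₁ := part1 t₁ t₂ ht₁ h12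
      have hCr0 : 0 < c.toReal := ENNReal.toReal_pos hc_ne0 hc_netop
      have realkey : ∀ t₁ t₂, 0 ≤ t₁ → t₁ ≤ t₂ →
          (Φ t₂).toReal + c.toReal * (t₂ - t₁) * (Φ t₂).toReal ^ α ≤ (Φ t₁).toReal := by
        intro t₁ t₂ ht₁ h12
        have h := keyE t₁ t₂ ht₁ h12
        have hft1 : Φ t₁ ≠ ⊤ := hfin t₁ ht₁
        have h2 : Φ t₂ ≠ ⊤ := hfin t₂ (le_trans ht₁ h12)
        have h3 : c * ENNReal.ofReal (t₂ - t₁) * Φ t₂ ^ α ≠ ⊤ :=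
          ne_top_of_le_ne_top hft1 (le_trans le_add_self h)
        have h4 := ENNReal.toReal_mono hft1 h
        rw [ENNReal.toReal_add h2 h3, ENNReal.toReal_mul, ENNReal.toReal_mul,
          ENNReal.toReal_ofReal (by linarith), ← ENNReal.toReal_rpow] at h4
        exact h4
      intro t ht
      have hNr0 : 0 < N.toReal := ENNReal.toReal_pos hN0 hNtop
      have hT0 : (0:ℝ) ≤ ((σ + D) / D) * CS * N.toReal ^ α * c₁⁻¹ *
          (Φ 0).toReal ^ (D / (σ + D)) := by positivity
      have ht0 : 0 ≤ t := le_trans hT0 ht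
      by_contra hne
      have hφpos : 0 < (Φ t).toReal := ENNReal.toReal_pos hne (hfin t ht0)
      have hode := lemODE (fun s => (Φ s).toReal) c.toReal α hCr0 hα0 hα1
        (fun s _ => ENNReal.toReal_nonneg) realkey le_rfl ht0 hφpos
      simp only [sub_zero] at hode
      have hCr_eq : c.toReal = c₁ / CS * N.toReal ^ (-α) := by
        rw [hc, ENNReal.toReal_mul, ENNReal.toReal_div, ENNReal.toReal_ofReal hc₁.le,
          ENNReal.toReal_ofReal hCS.le, ← ENNReal.toReal_rpow]
      have h1α : 1 - α = D / (σ + D) := by rw [hαdef]; field_simp; ring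
      have hNαne : N.toReal ^ α ≠ 0 := (Real.rpow_pos_of_pos hNr0 α).ne'
      have hβCT : (1 - α) * c.toReal * (((σ + D) / D) * CS * N.toReal ^ α * c₁⁻¹ *
          (Φ 0).toReal ^ (D / (σ + D))) = (Φ 0).toReal ^ (1 - α) := by
        rw [hCr_eq, h1α, Real.rpow_neg hNr0.le]
        field_simp
      have hmul : (1 - α) * c.toReal * (((σ + D) / D) * CS * N.toReal ^ α * c₁⁻¹ *
          (Φ 0).toReal ^ (D / (σ + D))) ≤ (1 - α) * c.toReal * t := by
        apply mul_le_mul_of_nonneg_left ht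
        exact mul_nonneg (by linarith) hCr0.le
      rw [hβCT] at hmul
      have hfinal : (Φ t).toReal ^ (1 - α) ≤ 0 := by linarith
      exact absurd hfinal (not_le.2 (Real.rpow_pos_of_pos hφpos _))
  exact ⟨part1, part2⟩
end
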